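/- For every natural number n, parameters u_ℓ = (θ_ℓ, φ_ℓ, λ_ℓ) ∈ ℝ³ for ℓ = 0,…,n−1, and all n-bit strings J' and J, the coin-marginal transition probability of one walk evolution equals the quantum kernel: ∑_{k ∈ ZMod 2} ‖U_{(k,J'),(0,J)}‖² = f_q(J' ⊕ J), where f_q(I) = ∏_{ℓ=0}^{n−1} c_ℓ with c_ℓ = cos²(θ_ℓ/2) if I_ℓ ⊕ I_{ℓ−1} = 0 and c_ℓ = sin²(θ_ℓ/2) if I_ℓ ⊕ I_{ℓ−1} = 1 (convention I_{−1} = 0). In particular this probability does not depend on the phases φ_ℓ and λ_ℓ. -/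

import Mathlib

/-- The single-qubit rotation gate `U3(θ,φ,λ)`, indexed by `ZMod 2`. -/
noncomputable def U3 (θ φ lam : ℝ) : Matrix (ZMod 2) (ZMod 2) ℂ :=
  Matrix.of fun μ ν =>
    if μ = 0 then
      (if ν = 0 then (Real.cos (θ / 2) : ℂ)
       else -Complex.exp (Complex.I * lam) * (Real.sin (θ / 2) : ℂ))
    else
      (if ν = 0 then Complex.exp (Complex.I * φ) * (Real.sin (θ / 2) : ℂ)
       else Complex.exp (Complex.I * (lam + φ)) * (Real.cos (θ / 2) : ℂ))

/-- Coin rotation: `U3` acting on the coin qubit, identity on the graph qubits. -/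
noncomputable def coinR (n : ℕ) (u : ℝ × ℝ × ℝ) :
    Matrix (ZMod 2 × (Fin n → ZMod 2)) (ZMod 2 × (Fin n → ZMod 2)) ℂ :=
  Matrix.of fun p q => if p.2 = q.2 then U3 u.1 u.2.1 u.2.2 p.1 q.1 else 0

/-- Controlled flip of the `k`-th graph qubit, controlled by the coin qubit. -/
def flipC (n : ℕ) (k : Fin n) :
    Matrix (ZMod 2 × (Fin n → ZMod 2)) (ZMod 2 × (Fin n → ZMod 2)) ℂ :=
  Matrix.of fun p q =>
    if p.1 = q.1 ∧ p.2 = q.2 + q.1 • (Pi.single k 1 : Fin n → ZMod 2) then 1 else 0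

/-- One quantum-walk evolution `U = W_{n-1} ⋯ W_1 W_0`, where `W_k = C_k · R_k`. -/
noncomputable def walkU (n : ℕ) (u : Fin n → ℝ × ℝ × ℝ) :
    Matrix (ZMod 2 × (Fin n → ZMod 2)) (ZMod 2 × (Fin n → ZMod 2)) ℂ :=
  ((List.finRange n).reverse.map (fun k => flipC n k * coinR n (u k))).prod

/-- The bit `I_{ℓ-1}` of an `n`-bit string, with the convention `I_{-1} = 0`. -/
def prevBit (n : ℕ) (I : Fin n → ZMod 2) (ℓ : Fin n) : ZMod 2 :=
  if 0 < (ℓ : ℕ) then I ⟨(ℓ : ℕ) - 1, lt_of_le_of_lt (Nat.sub_le _ _) ℓ.isLt⟩ else 0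

/-- Quantum random-walk kernel, with the convention `I_{-1} = 0`. -/
noncomputable def fq (n : ℕ) (θ : Fin n → ℝ) (I : Fin n → ZMod 2) : ℝ :=
  ∏ ℓ : Fin n,
    if I ℓ + prevBit n I ℓ = 0 then Real.cos (θ ℓ / 2) ^ 2 else Real.sin (θ ℓ / 2) ^ 2

/-!
Started from coin `0`, step `W_ℓ` flips graph bit `ℓ` exactly when the coin it produces is `1`,
and no other step touches that bit. So the target string `J'` fixes the whole coin history: the
coin after step `ℓ` is bit `ℓ` of `I = J' + J`. Only one path reaches `(k, J')`, the one with
`k = I_{n-1}`, and its amplitude is `∏ ℓ, U3(u_ℓ)[I_ℓ, I_{ℓ-1}]`. Each factor has modulus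
`|cos (θ_ℓ / 2)|` or `|sin (θ_ℓ / 2)|` according to whether `I_ℓ = I_{ℓ-1}`, so the phases drop
out.
-/

open Finset

lemma ZMod.two_eq_zero_or_one (x : ZMod 2) : x = 0 ∨ x = 1 := by
  decide +revert

lemma bitString_add_add_cancel_right {n : ℕ} (a b : Fin n → ZMod 2) : a + b + b = a :=
  funext fun _ => CharTwo.add_cancel_right _ _

lemma norm_U3_sq (θ φ lam : ℝ) (a b : ZMod 2) :
    ‖U3 θ φ lam a b‖ ^ 2 =
      if a + b = 0 then Real.cos (θ / 2) ^ 2 else Real.sin (θ / 2) ^ 2 := by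
  obtain rfl | rfl := ZMod.two_eq_zero_or_one a <;>
    obtain rfl | rfl := ZMod.two_eq_zero_or_one b <;>
    simp [U3, Complex.norm_exp_I_mul_ofReal, ← Complex.ofReal_add, -Complex.ofReal_cos,
      -Complex.ofReal_sin, show (1 : ZMod 2) + 1 = 0 from rfl]

section QuantumWalk

variable {n : ℕ}

lemma add_smul_single_apply_of_ne (I : Fin n → ZMod 2) (c : ZMod 2) {k ℓ : Fin n} (h : ℓ ≠ k) :
    (I + c • Pi.single k 1 : Fin n → ZMod 2) ℓ = I ℓ := by
  simp [h]

lemma forall_le_add_smul_single_eq_zero_iff (I : Fin n → ZMod 2) (c : ZMod 2) {m : ℕ}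
    (hm : m < n) :
    (∀ ℓ : Fin n, m ≤ ℓ → (I + c • Pi.single ⟨m, hm⟩ 1 : Fin n → ZMod 2) ℓ = 0) ↔
      (∀ ℓ : Fin n, m + 1 ≤ ℓ → I ℓ = 0) ∧ c = I ⟨m, hm⟩ := by
  have hflipped : (I + c • Pi.single ⟨m, hm⟩ 1 : Fin n → ZMod 2) ⟨m, hm⟩ = I ⟨m, hm⟩ + c := by
    simp
  constructor
  · intro h
    refine ⟨fun ℓ hℓ => ?_, ?_⟩
    · rw [← add_smul_single_apply_of_ne I c (Fin.ne_of_gt (show ⟨m, _⟩ < ℓ from hℓ))]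
      exact h ℓ (Nat.le_of_succ_le hℓ)
    · rw [← CharTwo.add_eq_zero, add_comm, ← hflipped]
      exact h _ le_rfl
  · rintro ⟨h, rfl⟩ ℓ hℓ
    obtain rfl | hne := eq_or_ne ℓ ⟨m, hm⟩
    · rw [hflipped, CharTwo.add_self_eq_zero]
    · rw [add_smul_single_apply_of_ne I _ hne]
      have hℓm : (ℓ : ℕ) ≠ m := fun h => hne (Fin.ext h)
      exact h ℓ (by omega)

lemma flipC_mul_apply (k : Fin n)
    (X : Matrix (ZMod 2 × (Fin n → ZMod 2)) (ZMod 2 × (Fin n → ZMod 2)) ℂ)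
    (c : ZMod 2) (K : Fin n → ZMod 2) (q : ZMod 2 × (Fin n → ZMod 2)) :
    (flipC n k * X) (c, K) q = X (c, K + c • Pi.single k 1) q := by
  have hrow : ∀ p : ZMod 2 × (Fin n → ZMod 2),
      flipC n k (c, K) p = if (c, K + c • Pi.single k 1) = p then 1 else 0 := by
    rintro ⟨c', K'⟩
    simp only [flipC, Matrix.of_apply, Prod.mk.injEq]
    refine if_congr (and_congr_right fun hc => ?_) rfl rfl
    subst hc
    constructor
    · rintro rfl
      exact bitString_add_add_cancel_right _ _
    · rintro rfl
      exact (bitString_add_add_cancel_right _ _).symm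
  simp only [Matrix.mul_apply, hrow, ite_mul, one_mul, zero_mul, sum_ite_eq, mem_univ, if_true]

lemma coinR_mul_apply (v : ℝ × ℝ × ℝ)
    (X : Matrix (ZMod 2 × (Fin n → ZMod 2)) (ZMod 2 × (Fin n → ZMod 2)) ℂ)
    (c : ZMod 2) (K : Fin n → ZMod 2) (q : ZMod 2 × (Fin n → ZMod 2)) :
    (coinR n v * X) (c, K) q = ∑ c', U3 v.1 v.2.1 v.2.2 c c' * X (c', K) q := by
  simp [Matrix.mul_apply, Fintype.sum_prod_type, coinR, ite_mul]

lemma flipC_mul_coinR_mul_apply (k : Fin n) (v : ℝ × ℝ × ℝ)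
    (X : Matrix (ZMod 2 × (Fin n → ZMod 2)) (ZMod 2 × (Fin n → ZMod 2)) ℂ)
    (c : ZMod 2) (K : Fin n → ZMod 2) (q : ZMod 2 × (Fin n → ZMod 2)) :
    (flipC n k * coinR n v * X) (c, K) q =
      ∑ c', U3 v.1 v.2.1 v.2.2 c c' * X (c', K + c • Pi.single k 1) q := by
  rw [Matrix.mul_assoc, flipC_mul_apply, coinR_mul_apply]

noncomputable def walkPrefix (n : ℕ) (u : Fin n → ℝ × ℝ × ℝ) (m : ℕ) :
    Matrix (ZMod 2 × (Fin n → ZMod 2)) (ZMod 2 × (Fin n → ZMod 2)) ℂ :=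
  (((List.finRange n).take m).reverse.map (fun k => flipC n k * coinR n (u k))).prod

lemma walkPrefix_zero (u : Fin n → ℝ × ℝ × ℝ) : walkPrefix n u 0 = 1 := rfl

lemma walkPrefix_succ (u : Fin n → ℝ × ℝ × ℝ) {m : ℕ} (hm : m < n) :
    walkPrefix n u (m + 1) = flipC n ⟨m, hm⟩ * coinR n (u ⟨m, hm⟩) * walkPrefix n u m := by
  have hlen : m < (List.finRange n).length := by simpa
  simp [walkPrefix, List.take_add_one, List.getElem?_eq_getElem hlen]

lemma walkPrefix_self (u : Fin n → ℝ × ℝ × ℝ) : walkPrefix n u n = walkU n u := by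
  rw [walkPrefix, List.take_of_length_le (by simp), walkU]

-- `prevBit` extended to `m = n`: the coin left by the first `m` steps of the walk.
def bitBefore (n : ℕ) (I : Fin n → ZMod 2) (m : ℕ) : ZMod 2 :=
  if h : 0 < m ∧ m ≤ n then I ⟨m - 1, by omega⟩ else 0

lemma prevBit_eq_bitBefore (I : Fin n → ZMod 2) (ℓ : Fin n) :
    prevBit n I ℓ = bitBefore n I ℓ := by
  unfold prevBit bitBefore
  split_ifs <;> first | rfl | omega

lemma bitBefore_zero (I : Fin n → ZMod 2) : bitBefore n I 0 = 0 := rfl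

lemma bitBefore_succ (I : Fin n → ZMod 2) {m : ℕ} (hm : m < n) :
    bitBefore n I (m + 1) = I ⟨m, hm⟩ := by
  simp [bitBefore, hm]

lemma bitBefore_congr {I I' : Fin n → ZMod 2} {m : ℕ}
    (h : ∀ ℓ : Fin n, (ℓ : ℕ) < m → I ℓ = I' ℓ) : bitBefore n I m = bitBefore n I' m := by
  unfold bitBefore
  split_ifs with hm
  · exact h _ (Nat.sub_lt hm.1 Nat.one_pos)
  · rfl

noncomputable def coinAmplitude (u : Fin n → ℝ × ℝ × ℝ) (I : Fin n → ZMod 2) (ℓ : Fin n) : ℂ :=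
  U3 (u ℓ).1 (u ℓ).2.1 (u ℓ).2.2 (I ℓ) (prevBit n I ℓ)

lemma coinAmplitude_congr (u : Fin n → ℝ × ℝ × ℝ) {I I' : Fin n → ZMod 2} {ℓ : Fin n}
    (h : ∀ ℓ' : Fin n, ℓ' ≤ ℓ → I ℓ' = I' ℓ') : coinAmplitude u I ℓ = coinAmplitude u I' ℓ := by
  rw [coinAmplitude, coinAmplitude, h ℓ le_rfl, prevBit_eq_bitBefore, prevBit_eq_bitBefore,
    bitBefore_congr fun ℓ' hℓ' => h ℓ' hℓ'.le]

noncomputable def pathAmplitude (u : Fin n → ℝ × ℝ × ℝ) (I : Fin n → ZMod 2) (m : ℕ) : ℂ :=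
  ∏ ℓ ∈ univ.filter (fun ℓ : Fin n => (ℓ : ℕ) < m), coinAmplitude u I ℓ

lemma pathAmplitude_zero (u : Fin n → ℝ × ℝ × ℝ) (I : Fin n → ZMod 2) :
    pathAmplitude u I 0 = 1 := by
  simp [pathAmplitude]

lemma pathAmplitude_succ (u : Fin n → ℝ × ℝ × ℝ) (I : Fin n → ZMod 2) {m : ℕ} (hm : m < n) :
    pathAmplitude u I (m + 1) = coinAmplitude u I ⟨m, hm⟩ * pathAmplitude u I m := by
  have hfilter : univ.filter (fun ℓ : Fin n => (ℓ : ℕ) < m + 1) =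
      insert ⟨m, hm⟩ (univ.filter fun ℓ : Fin n => (ℓ : ℕ) < m) := by
    ext ℓ
    simp only [Order.lt_add_one_iff, mem_filter, mem_univ, true_and, mem_insert, Fin.ext_iff]
    omega
  rw [pathAmplitude, hfilter, prod_insert (by simp), pathAmplitude]

lemma pathAmplitude_congr (u : Fin n → ℝ × ℝ × ℝ) {I I' : Fin n → ZMod 2} {m : ℕ}
    (h : ∀ ℓ : Fin n, (ℓ : ℕ) < m → I ℓ = I' ℓ) : pathAmplitude u I m = pathAmplitude u I' m :=
  prod_congr rfl fun _ hℓ => coinAmplitude_congr u fun ℓ' hℓ' =>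
    h ℓ' (lt_of_le_of_lt hℓ' (mem_filter.1 hℓ).2)

lemma pathAmplitude_self (u : Fin n → ℝ × ℝ × ℝ) (I : Fin n → ZMod 2) :
    pathAmplitude u I n = ∏ ℓ, coinAmplitude u I ℓ := by
  simp [pathAmplitude]

theorem walkPrefix_apply (u : Fin n → ℝ × ℝ × ℝ) {m : ℕ} (hm : m ≤ n) (c : ZMod 2)
    (I J : Fin n → ZMod 2) :
    walkPrefix n u m (c, I + J) (0, J) =
      if (∀ ℓ : Fin n, m ≤ (ℓ : ℕ) → I ℓ = 0) ∧ c = bitBefore n I m then pathAmplitude u I m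
      else 0 := by
  induction m generalizing c I with
  | zero =>
    simp [walkPrefix_zero, Matrix.one_apply, bitBefore_zero, pathAmplitude_zero, funext_iff,
      and_comm]
  | succ m ih =>
    have hm' : m < n := hm
    have hbelow : ∀ ℓ : Fin n, (ℓ : ℕ) < m →
        (I + c • Pi.single ⟨m, hm'⟩ 1 : Fin n → ZMod 2) ℓ = I ℓ := fun ℓ hℓ =>
      add_smul_single_apply_of_ne I c (Fin.ne_of_lt (show ℓ < ⟨m, hm'⟩ from hℓ))
    -- the induction hypothesis is used for `I + c • e_m`, which agrees with `I` below `m`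
    rw [walkPrefix_succ u hm', flipC_mul_coinR_mul_apply, add_right_comm, sum_congr rfl fun c' _ => by
      rw [ih hm'.le, bitBefore_congr hbelow, pathAmplitude_congr u hbelow]]
    have hflip := forall_le_add_smul_single_eq_zero_iff I c hm'
    rw [bitBefore_succ I hm', pathAmplitude_succ u I hm']
    by_cases hP : (∀ ℓ : Fin n, m + 1 ≤ (ℓ : ℕ) → I ℓ = 0) ∧ c = I ⟨m, hm'⟩
    · obtain ⟨hI, rfl⟩ := hP
      simp only [eq_true (hflip.2 ⟨hI, rfl⟩), eq_true hI, true_and, mul_ite, mul_zero,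
        sum_ite_eq', mem_univ, if_true, coinAmplitude, prevBit_eq_bitBefore]
    · rw [if_neg hP]
      exact sum_eq_zero fun c' _ => by rw [if_neg fun h => hP (hflip.1 h.1), mul_zero]

end QuantumWalk

theorem stmt_10 (n : ℕ) (u : Fin n → ℝ × ℝ × ℝ) (J' J : Fin n → ZMod 2) :
    ∑ k : ZMod 2, ‖walkU n u (k, J') (0, J)‖ ^ 2 =
      fq n (fun ℓ => (u ℓ).1) (J' + J) := by
  have hentry : ∀ k, walkU n u (k, J') (0, J) =
      if k = bitBefore n (J' + J) n then ∏ ℓ, coinAmplitude u (J' + J) ℓ else 0 := by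
    intro k
    have hvacuous : ∀ ℓ : Fin n, n ≤ (ℓ : ℕ) → (J' + J) ℓ = 0 := fun ℓ h =>
      absurd ℓ.is_lt h.not_gt
    conv_lhs => rw [← walkPrefix_self, ← bitString_add_add_cancel_right J' J]
    rw [walkPrefix_apply u le_rfl, pathAmplitude_self, if_congr (and_iff_right hvacuous) rfl rfl]
  rw [Fintype.sum_eq_single (bitBefore n (J' + J) n) fun k hk => by
      rw [hentry, if_neg hk, norm_zero, zero_pow two_ne_zero],
    hentry, if_pos rfl, norm_prod, ← prod_pow, fq]
  exact prod_congr rfl fun ℓ _ => norm_U3_sq _ _ _ _ _
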